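/- Let H and A be finitely generated abelian groups, ν : H → A a surjective homomorphism, and ξ ≤ H a non-primitive subgroup (ξ ≠ ξ̄). Then the set {ρ ∈ Ĥ : ρ(x) = 1 for all x ∈ ker ν, ρ(y) = 1 for all y ∈ ξ, and ρ(z) ≠ 1 for some z ∈ ξ̄} (that is, im(ν̂) ∩ (V(ξ) ∖ V(ξ̄))) is infinite if and only if rank(ker ν + ξ) < rank H and there exists a subgroup ξ′ with ξ ≤ ξ′ ⊊ ξ̄ such that ξ̄/ξ′ is cyclic and ν(x) ≠ 0 for every x ∈ ξ̄ ∖ ξ′. (This is the equality Υ_A(V(ξ) ∖ V(ξ̄)) = σ_A(ξ) ∩ θ_A(ξ).) -/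

import Mathlib

open scoped TensorProduct Pointwise

/-- The set of surjective homomorphisms between two additive groups. -/
def EpiSet (G A : Type*) [AddGroup G] [AddGroup A] : Type _ :=
  {f : G →+ A // Function.Surjective f}

/-- Two epimorphisms are equivalent if they differ by an automorphism of the target. -/
def GammaRel (G A : Type*) [AddGroup G] [AddGroup A] (ν₁ ν₂ : EpiSet G A) : Prop :=
  ∃ α : A ≃+ A, ∀ g : G, α (ν₁.1 g) = ν₂.1 g

/-- The parameter set `Γ(G,A) = Epi(G,A)/Aut(A)`. -/
def GammaSet (G A : Type*) [AddGroup G] [AddGroup A] : Type _ :=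
  Quot (GammaRel G A)

/-- The character group of an (additively written) abelian group. -/
abbrev CharGp (H : Type*) [AddCommGroup H] : Type _ := Multiplicative H →* ℂˣ

/-- `V(ξ)`, the set of characters vanishing (i.e. taking value 1) on a subgroup `ξ`. -/
def charV {H : Type*} [AddCommGroup H] (ξ : AddSubgroup H) : Set (CharGp H) :=
  {ρ | ∀ x ∈ ξ, ρ (Multiplicative.ofAdd x) = 1}

/-- The primitive closure of a subgroup of an abelian group. -/
def pclose {H : Type*} [AddCommGroup H] (ξ : AddSubgroup H) : AddSubgroup H where
  carrier := {x | ∃ m : ℕ, 0 < m ∧ m • x ∈ ξ}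
  zero_mem' := ⟨1, Nat.one_pos, by simpa using ξ.zero_mem⟩
  add_mem' := by
    rintro a b ⟨m, hm, ha⟩ ⟨k, hk, hb⟩
    refine ⟨m * k, Nat.mul_pos hm hk, ?_⟩
    rw [smul_add]
    exact ξ.add_mem (by rw [mul_comm, mul_smul]; exact ξ.nsmul_mem ha k)
      (by rw [mul_smul]; exact ξ.nsmul_mem hb m)
  neg_mem' := by
    rintro a ⟨m, hm, ha⟩
    exact ⟨m, hm, by rw [smul_neg]; exact ξ.neg_mem ha⟩

/-- A subgroup is primitive if it equals its primitive closure. -/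
def IsPrimitiveSub {H : Type*} [AddCommGroup H] (ξ : AddSubgroup H) : Prop :=
  pclose ξ = ξ

/-- The determinant group `ξ̄/ξ` of a subgroup. -/
def detGroup {H : Type*} [AddCommGroup H] (ξ : AddSubgroup H) : Type _ :=
  ↥(pclose ξ) ⧸ ξ.addSubgroupOf (pclose ξ)

noncomputable instance {H : Type*} [AddCommGroup H] (ξ : AddSubgroup H) :
    AddCommGroup (detGroup ξ) := by unfold detGroup; infer_instance

/-- The rank of a f.g. abelian group, `dim_ℚ (B ⊗ ℚ)`. -/
noncomputable def rkOf (B : Type*) [AddCommGroup B] : ℕ :=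
  Module.finrank ℚ (ℚ ⊗[ℤ] B)

/-- The largest order of an element of `K`. -/
noncomputable def maxOrder (K : Type*) [AddGroup K] : ℕ :=
  sSup (Set.range fun g : K => addOrderOf g)

/-- The translate `η·V(ξ)` of the "subtorus" `V(ξ)` by the character `η`. -/
def transTorus {H : Type*} [AddCommGroup H] (η : CharGp H) (ξ : AddSubgroup H) :
    Set (CharGp H) :=
  (η * ·) '' charV ξ

/-- `S` is a maximal positive-dimensional torsion-translated subtorus inside `W`. -/
def MaxTransTorusIn {H : Type*} [AddCommGroup H] (S W : Set (CharGp H)) : Prop :=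
  S.Infinite ∧ S ⊆ W ∧
    ∀ (χ : AddSubgroup H) (η' : CharGp H), IsPrimitiveSub χ → IsOfFinOrder η' →
      S ⊆ transTorus η' χ → transTorus η' χ ⊆ W → transTorus η' χ = S

/-- The collection `Ξ_d(W)` of subgroups of `H` attached to a subvariety `W` of the
character group. -/
def Xi {H : Type*} [AddCommGroup H] (d : ℕ) (W : Set (CharGp H)) : Set (AddSubgroup H) :=
  {ξ | IsAddCyclic (detGroup ξ) ∧ Nat.card (detGroup ξ) ∣ d ∧
    ∃ η : CharGp H, IsOfFinOrder η ∧ orderOf η = Nat.card (detGroup ξ) ∧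
      (∀ x ∈ ξ, η (Multiplicative.ofAdd x) = 1) ∧
      {x : H | x ∈ pclose ξ ∧ η (Multiplicative.ofAdd x) = 1} = (ξ : Set H) ∧
      MaxTransTorusIn (transTorus η (pclose ξ)) W}

/-- Evaluation of an element of the group algebra `ℂ[H]` at a character, i.e. the
`ℂ`-algebra homomorphism `ℂ[H] → ℂ` extending the character. -/
noncomputable def evalAt {H : Type*} [AddCommGroup H] (ρ : CharGp H) :
    AddMonoidAlgebra ℂ H →ₐ[ℂ] ℂ :=
  AddMonoidAlgebra.lift ℂ ℂ H ((Units.coeHom ℂ).comp ρ)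

/-- `W` is a Zariski closed subset of the character group. -/
def IsZarClosed {H : Type*} [AddCommGroup H] (W : Set (CharGp H)) : Prop :=
  ∃ S : Set (AddMonoidAlgebra ℂ H), W = {ρ | ∀ f ∈ S, evalAt ρ f = 0}

/-- The support of a module: the set of maximal ideals at which the localization is
nonzero. -/
def suppMax (S M : Type*) [CommRing S] [AddCommGroup M] [Module S M] :
    Set (MaximalSpectrum S) :=
  {m | haveI := m.isMaximal.isPrime; Nontrivial (LocalizedModule m.asIdeal.primeCompl M)}

/-!
Put `N = ker ν + ξ`, so that the set in question is `V(N) ∖ V(ξ̄)` and `V(N)` is the character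
group of `H/N`. If `rank N = rank H`, then `H/N` is finite and so is `V(N)`. Otherwise `H/N`
surjects onto `ℤ`, which embeds `ℂˣ` into `V(ξ̄ + N)`; translating this copy by a character of
`H/N` that is nontrivial at some `z ∈ ξ̄ ∖ N` gives infinitely many points of `V(N) ∖ V(ξ̄)`.

Given `ρ ∈ V(N) ∖ V(ξ̄)`, the subgroup `ξ' = ξ̄ ∩ ker ρ` works: `ξ̄/ξ'` embeds in `ℂˣ` and is
finite, hence cyclic. Conversely, if `ξ'` exists, any `z ∈ ξ̄ ∖ ξ'` lies outside `N` because `ν`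
does not vanish on `ξ̄ ∖ ξ'`.
-/

section Rank

theorem rkOf_eq_finrank (M : Type*) [AddCommGroup M] : rkOf M = Module.finrank ℤ M := by
  have := IsLocalization.tensorProduct_isLocalizedModule (nonZeroDivisors ℤ) ℚ (M := M)
  exact (IsLocalization.finrank_eq ℚ (nonZeroDivisors ℤ) le_rfl).trans
    (@IsLocalizedModule.finrank_eq ℤ M (ℚ ⊗[ℤ] M) _ _ _ _ _ _ (TensorProduct.mk ℤ ℚ M 1) this
      le_rfl)

theorem rkOf_quotient_add_rkOf {H : Type*} [AddCommGroup H] [AddGroup.FG H] (N : AddSubgroup H) :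
    rkOf (H ⧸ N) + rkOf N = rkOf H := by
  simp only [rkOf_eq_finrank]
  exact (AddSubgroup.toIntSubmodule N).finrank_quotient_add_finrank

theorem finite_of_rkOf_eq_zero {M : Type*} [AddCommGroup M] [AddGroup.FG M] (h : rkOf M = 0) :
    Finite M := by
  rw [rkOf_eq_finrank, Module.finrank_eq_zero_iff] at h
  refine AddCommGroup.finite_of_fg_isAddTorsion M fun x => ?_
  obtain ⟨a, ha, hax⟩ := h x
  exact isOfFinAddOrder_iff_zsmul_eq_zero.mpr ⟨a, ha, hax⟩

theorem exists_surjective_int_of_rkOf_pos {M : Type*} [AddCommGroup M] [AddGroup.FG M]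
    (h : 0 < rkOf M) : ∃ φ : M →+ ℤ, Function.Surjective φ := by
  set T := Submodule.torsion ℤ M
  have hT : Module.finrank ℤ T = 0 := by
    refine Module.finrank_eq_zero_iff.mpr fun ⟨x, ⟨a, hax⟩⟩ => ⟨a, nonZeroDivisors.ne_zero a.2, ?_⟩
    exact Subtype.ext hax
  have hpos : 0 < Module.finrank ℤ (M ⧸ T) := by
    have := T.finrank_quotient_add_finrank
    rw [rkOf_eq_finrank] at h
    omega
  have : Module.Free ℤ (M ⧸ T) := Module.free_of_finite_type_torsion_free'
  let b := Module.Free.chooseBasis ℤ (M ⧸ T)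
  obtain ⟨i⟩ : Nonempty (Module.Free.ChooseBasisIndex ℤ (M ⧸ T)) := by
    rw [← Fintype.card_pos_iff, ← Module.finrank_eq_card_chooseBasisIndex]
    exact hpos
  obtain ⟨y, hy⟩ := T.mkQ_surjective (b i)
  refine ⟨((b.coord i).comp T.mkQ).toAddMonoidHom, fun k => ⟨k • y, ?_⟩⟩
  simp [hy]

instance AddSubgroup.instAddGroupFG {H : Type*} [AddCommGroup H] [AddGroup.FG H]
    (P : AddSubgroup H) : AddGroup.FG P :=
  Module.Finite.iff_addGroup_fg.mp
    (inferInstanceAs (Module.Finite ℤ (AddSubgroup.toIntSubmodule P)))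

end Rank

section Characters

variable {H K : Type*} [AddCommGroup H] [AddCommGroup K]

def charComap (f : H →+ K) (χ : CharGp K) : CharGp H := χ.comp f.toMultiplicative

@[simp] theorem charComap_apply (f : H →+ K) (χ : CharGp K) (x : H) :
    charComap f χ (Multiplicative.ofAdd x) = χ (Multiplicative.ofAdd (f x)) := rfl

theorem charComap_injective {f : H →+ K} (hf : Function.Surjective f) :
    Function.Injective (charComap f) := fun χ χ' h =>
  MonoidHom.ext fun y => by
    obtain ⟨x, hx⟩ := hf y.toAdd
    simpa [hx] using DFunLike.congr_fun h (Multiplicative.ofAdd x)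

theorem charComap_mem_charV_ker (f : H →+ K) (χ : CharGp K) : charComap f χ ∈ charV f.ker :=
  fun x hx => by rw [charComap_apply, hx, ofAdd_zero, map_one]

theorem charV_sup (L M : AddSubgroup H) : charV (L ⊔ M) = charV L ∩ charV M := by
  ext ρ
  refine ⟨fun h => ⟨fun x hx => h x (AddSubgroup.mem_sup_left hx),
    fun x hx => h x (AddSubgroup.mem_sup_right hx)⟩, fun ⟨hL, hM⟩ x hx => ?_⟩
  obtain ⟨y, hy, z, hz, rfl⟩ := AddSubgroup.mem_sup.mp hx
  rw [ofAdd_add, map_mul, hL y hy, hM z hz, one_mul]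

theorem charV_subset_range_charComap (N : AddSubgroup H) :
    charV N ⊆ Set.range (charComap (QuotientAddGroup.mk' N)) := fun ρ hρ =>
  ⟨AddMonoidHom.toMultiplicativeLeft
      (QuotientAddGroup.lift N (AddMonoidHom.toMultiplicativeLeft.symm ρ) fun x hx =>
        congrArg Additive.ofMul (hρ x hx)), rfl⟩

instance CharGp.finite [Finite K] : Finite (CharGp K) :=
  Finite.of_injective
    (fun χ : CharGp K => AddChar.toMonoidHomEquiv.symm ((Units.coeHom ℂ).comp χ))
    fun χ χ' h => MonoidHom.ext fun y => Units.ext (by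
      simpa using DFunLike.congr_fun h y.toAdd)

theorem charV_finite (N : AddSubgroup H) [Finite (H ⧸ N)] : (charV N).Finite :=
  (Set.finite_range _).subset (charV_subset_range_charComap N)

theorem rkOf_lt_of_charV_infinite [AddGroup.FG H] {N : AddSubgroup H} (h : (charV N).Infinite) :
    rkOf N < rkOf H := by
  by_contra! hle
  have := finite_of_rkOf_eq_zero (M := H ⧸ N) (by have := rkOf_quotient_add_rkOf N; omega)
  exact h (charV_finite N)

instance Complex.instInfiniteUnits : Infinite ℂˣ :=
  Infinite.of_injective (fun n : ℕ => Units.mk0 ((n : ℂ) + 1) n.cast_add_one_ne_zero)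
    fun m n h => by simpa using congrArg Units.val h

theorem charV_ker_infinite {φ : H →+ ℤ} (hφ : Function.Surjective φ) :
    (charV φ.ker).Infinite :=
  Set.infinite_of_injective_forall_mem ((charComap_injective hφ).comp (zpowersHom ℂˣ).injective)
    fun _ => charComap_mem_charV_ker φ _

open Complex in
noncomputable def ratExpChar : ℚ →+ Additive ℂˣ :=
  AddMonoidHom.mk'
    (fun q => Additive.ofMul (Units.mk0 (exp (2 * Real.pi * I * q)) (exp_ne_zero _))) fun p q => by
      rw [← ofMul_mul]
      congr 1
      ext
      simp [mul_add, exp_add]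

open Complex in
theorem ratExpChar_eq_zero_iff (q : ℚ) : ratExpChar q = 0 ↔ q ∈ AddSubgroup.zmultiples 1 := by
  have h2πI : 2 * (Real.pi : ℂ) * I ≠ 0 := two_pi_I_ne_zero
  simp only [ratExpChar, AddMonoidHom.mk'_apply, ofMul_eq_zero, Units.ext_iff, Units.val_mk0,
    Units.val_one, exp_eq_one_iff, AddSubgroup.mem_zmultiples_iff, zsmul_eq_mul, mul_one]
  refine exists_congr fun n => ?_
  rw [mul_comm, mul_left_inj' h2πI, eq_comm]
  exact_mod_cast Iff.rfl

-- Turns Mathlib's `ℚ/ℤ`-valued characters (`CharacterModule`) into `ℂˣ`-valued ones.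
noncomputable def ratCircleChar : AddCircle (1 : ℚ) →+ Additive ℂˣ :=
  QuotientAddGroup.lift _ ratExpChar fun q hq => (ratExpChar_eq_zero_iff q).mpr hq

theorem ratCircleChar_ne_zero {a : AddCircle (1 : ℚ)} (ha : a ≠ 0) : ratCircleChar a ≠ 0 := by
  induction a using QuotientAddGroup.induction_on with
  | H q =>
    rw [ne_eq, QuotientAddGroup.eq_zero_iff] at ha
    rwa [show ratCircleChar q = ratExpChar q from rfl, ne_eq, ratExpChar_eq_zero_iff]

theorem exists_char_ne_one {x : K} (hx : x ≠ 0) :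
    ∃ χ : CharGp K, χ (Multiplicative.ofAdd x) ≠ 1 := by
  obtain ⟨c, hc⟩ := CharacterModule.exists_character_apply_ne_zero_of_ne_zero hx
  exact ⟨AddMonoidHom.toMultiplicativeLeft (ratCircleChar.comp c), ratCircleChar_ne_zero hc⟩

theorem setOf_mem_charV_apply_ne_one_infinite [AddGroup.FG H] {N : AddSubgroup H}
    (hrk : rkOf N < rkOf H) {z : H} (hz : z ∉ N) {m : ℕ} (hm : 0 < m) (hmz : m • z ∈ N) :
    {ρ ∈ charV N | ρ (Multiplicative.ofAdd z) ≠ 1}.Infinite := by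
  obtain ⟨χ, hχ⟩ := exists_char_ne_one (x := (z : H ⧸ N))
    (by rwa [ne_eq, QuotientAddGroup.eq_zero_iff])
  obtain ⟨φ, hφ⟩ := exists_surjective_int_of_rkOf_pos (M := H ⧸ N)
    (by have := rkOf_quotient_add_rkOf N; omega)
  set ψ := φ.comp (QuotientAddGroup.mk' N)
  have hψ : Function.Surjective ψ := hφ.comp (QuotientAddGroup.mk'_surjective N)
  have hNψ : N ≤ ψ.ker := fun x hx => by
    simp [ψ, (QuotientAddGroup.eq_zero_iff x).mpr hx]
  have hzψ : ψ z = 0 := by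
    have : m • ψ z = 0 := by rw [← map_nsmul]; exact hNψ hmz
    simpa [hm.ne'] using this
  set χ' := charComap (QuotientAddGroup.mk' N) χ
  have hχ' : χ' ∈ charV N := by
    simpa using charComap_mem_charV_ker (QuotientAddGroup.mk' N) χ
  refine ((charV_ker_infinite hψ).image (mul_right_injective χ').injOn).mono ?_
  rintro _ ⟨ρ, hρ, rfl⟩
  refine ⟨fun x hx => ?_, ?_⟩
  · rw [MonoidHom.mul_apply, hχ' x hx, hρ x (hNψ hx), one_mul]
  · rwa [MonoidHom.mul_apply, hρ z hzψ, mul_one]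

end Characters

theorem isAddCyclic_of_injective_units {G R : Type*} [AddGroup G] [Finite G] [CommRing R]
    [IsDomain R] (f : G →+ Additive Rˣ) (hf : Function.Injective f) : IsAddCyclic G :=
  isCyclic_multiplicative_iff.mp <|
    isCyclic_of_injective_ringHom ((Units.coeHom R).comp (AddMonoidHom.toMultiplicativeLeft f))
      (Units.val_injective.comp hf)

section PrimitiveClosure

variable {H : Type*} [AddCommGroup H]

theorem le_pclose (ξ : AddSubgroup H) : ξ ≤ pclose ξ :=
  fun x hx => ⟨1, one_pos, by rwa [one_smul]⟩

theorem finite_pclose_quotient [AddGroup.FG H] (ξ : AddSubgroup H) :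
    Finite (↥(pclose ξ) ⧸ ξ.addSubgroupOf (pclose ξ)) := by
  refine AddCommGroup.finite_of_fg_isAddTorsion _ fun g => ?_
  induction g using QuotientAddGroup.induction_on with
  | H x =>
    obtain ⟨m, hm, hmx⟩ := x.2
    refine isOfFinAddOrder_iff_nsmul_eq_zero.mpr ⟨m, hm, ?_⟩
    rw [← QuotientAddGroup.mk_nsmul, QuotientAddGroup.eq_zero_iff]
    exact hmx

theorem exists_cyclic_quotient_of_mem_charV [AddGroup.FG H] {ξ : AddSubgroup H} {ρ : CharGp H}
    (hρ : ρ ∈ charV ξ) (hρ' : ρ ∉ charV (pclose ξ)) :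
    ∃ ξ' : AddSubgroup H, ξ ≤ ξ' ∧ ξ' < pclose ξ ∧
      IsAddCyclic (↥(pclose ξ) ⧸ ξ'.addSubgroupOf (pclose ξ)) ∧
      ∀ x ∈ pclose ξ, ρ (Multiplicative.ofAdd x) = 1 → x ∈ ξ' := by
  set P := pclose ξ
  obtain ⟨z, hzP, hz⟩ : ∃ z ∈ P, ρ (Multiplicative.ofAdd z) ≠ 1 := by simpa [charV] using hρ'
  let f : P →+ Additive ℂˣ := (AddMonoidHom.toMultiplicativeLeft.symm ρ).comp P.subtype
  have hker : (f.ker.map P.subtype).addSubgroupOf P = f.ker :=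
    AddSubgroup.comap_map_eq_self_of_injective P.subtype_injective _
  have hξf : ξ.addSubgroupOf P ≤ f.ker := fun x hx => congrArg Additive.ofMul (hρ x hx)
  have : Finite (P ⧸ f.ker) := by
    have := finite_pclose_quotient ξ
    have := AddSubgroup.finiteIndex_of_finite_quotient (H := ξ.addSubgroupOf P)
    have := AddSubgroup.finiteIndex_of_le hξf
    infer_instance
  refine ⟨f.ker.map P.subtype, fun x hx => ⟨⟨x, le_pclose ξ hx⟩, hξf hx, rfl⟩,
    lt_of_le_of_ne (AddSubgroup.map_subtype_le _) ?_, ?_,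
    fun x hx h => ⟨⟨x, hx⟩, congrArg Additive.ofMul h, rfl⟩⟩
  · intro heq
    obtain ⟨y, hy, rfl⟩ : z ∈ f.ker.map P.subtype := by rwa [heq]
    exact hz (ofMul_eq_zero.mp hy)
  · have := isAddCyclic_of_injective_units _ (QuotientAddGroup.kerLift_injective f)
    exact isAddCyclic_of_surjective _ (QuotientAddGroup.quotientAddEquivOfEq hker).symm.surjective

theorem notMem_ker_sup_of_notMem {A : Type*} [AddCommGroup A] {ν : H →+ A}
    {ξ ξ' : AddSubgroup H} (hξξ' : ξ ≤ ξ') (hν : ∀ x ∈ pclose ξ, x ∉ ξ' → ν x ≠ 0) {z : H}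
    (hzP : z ∈ pclose ξ) (hzξ' : z ∉ ξ') : z ∉ ν.ker ⊔ ξ := by
  intro hzN
  obtain ⟨k, hk, y, hy, rfl⟩ := AddSubgroup.mem_sup.mp hzN
  have hkP : k ∈ pclose ξ := by simpa using sub_mem hzP (le_pclose ξ hy)
  exact hν k hkP (fun hkξ' => hzξ' (add_mem hkξ' (hξξ' hy))) hk

end PrimitiveClosure

theorem statement14_general {H A : Type*} [AddCommGroup H] [AddGroup.FG H]
    [AddCommGroup A] (ν : H →+ A) (ξ : AddSubgroup H) :
    {ρ : CharGp H | (∀ x ∈ ν.ker, ρ (Multiplicative.ofAdd x) = 1) ∧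
        (∀ y ∈ ξ, ρ (Multiplicative.ofAdd y) = 1) ∧
        ∃ z ∈ pclose ξ, ρ (Multiplicative.ofAdd z) ≠ 1}.Infinite ↔
      rkOf ↥(ν.ker ⊔ ξ) < rkOf H ∧
        ∃ ξ' : AddSubgroup H, ξ ≤ ξ' ∧ ξ' < pclose ξ ∧
          IsAddCyclic (↥(pclose ξ) ⧸ ξ'.addSubgroupOf (pclose ξ)) ∧
          ∀ x ∈ pclose ξ, x ∉ ξ' → ν x ≠ 0 := by
  convert_to (charV (ν.ker ⊔ ξ) \ charV (pclose ξ)).Infinite ↔ _ using 2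
  · rw [charV_sup]
    ext ρ
    simp only [charV, Set.mem_sdiff, Set.mem_inter_iff, Set.mem_ofPred_eq,
      not_forall, exists_prop, and_assoc]
  constructor
  · intro hinf
    obtain ⟨ρ, hρN, hρP⟩ := hinf.nonempty
    rw [charV_sup] at hρN
    obtain ⟨ξ', hξξ', hξ'P, hcyc, hmem⟩ := exists_cyclic_quotient_of_mem_charV hρN.2 hρP
    exact ⟨rkOf_lt_of_charV_infinite (hinf.mono Set.sdiff_subset), ξ', hξξ', hξ'P, hcyc,
      fun x hxP hxξ' hνx => hxξ' (hmem x hxP (hρN.1 x hνx))⟩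
  · rintro ⟨hrk, ξ', hξξ', hξ'P, -, hν⟩
    obtain ⟨z, hzP, hzξ'⟩ := SetLike.exists_of_lt hξ'P
    obtain ⟨m, hm, hmz⟩ := id hzP
    refine (setOf_mem_charV_apply_ne_one_infinite hrk
      (notMem_ker_sup_of_notMem hξξ' hν hzP hzξ') hm (AddSubgroup.mem_sup_right hmz)).mono
      fun ρ hρ => ⟨hρ.1, fun h => hρ.2 (h z hzP)⟩

/-- `Υ_A(V(ξ) ∖ V(ξ̄)) = σ_A(ξ) ∩ θ_A(ξ)` for a non-primitive subgroup `ξ ≤ H`: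
`im(ν̂) ∩ (V(ξ) ∖ V(ξ̄))` is infinite iff `rank(ker ν + ξ) < rank H` and there is a
subgroup `ξ ≤ ξ' ⊊ ξ̄` with `ξ̄/ξ'` cyclic and `ν` nonvanishing on `ξ̄ ∖ ξ'`. -/
theorem statement14 {H A : Type*} [AddCommGroup H] [AddGroup.FG H]
    [AddCommGroup A] [AddGroup.FG A]
    (ν : H →+ A) (hν : Function.Surjective ν)
    (ξ : AddSubgroup H) (hnp : ξ ≠ pclose ξ) :
    {ρ : CharGp H | (∀ x ∈ ν.ker, ρ (Multiplicative.ofAdd x) = 1) ∧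
        (∀ y ∈ ξ, ρ (Multiplicative.ofAdd y) = 1) ∧
        ∃ z ∈ pclose ξ, ρ (Multiplicative.ofAdd z) ≠ 1}.Infinite ↔
      rkOf ↥(ν.ker ⊔ ξ) < rkOf H ∧
        ∃ ξ' : AddSubgroup H, ξ ≤ ξ' ∧ ξ' < pclose ξ ∧
          IsAddCyclic (↥(pclose ξ) ⧸ ξ'.addSubgroupOf (pclose ξ)) ∧
          ∀ x ∈ pclose ξ, x ∉ ξ' → ν x ≠ 0 :=
  statement14_general ν ξ
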